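/- For any rooted binary phylogenetic tree T on a taxon set X evolving under the symmetric 4-state model N_4 (not necessarily ultrametric), P_{αβ}(X) ≥ P_{βγ}(X), i.e. P(MP(f,T) = {α,β} | ρ = α) ≥ P(MP(f,T) = {β,γ} | ρ = α). -/
import Mathlib


/-- A rooted binary phylogenetic tree: a `leaf` is a single taxon, and the
root of `node p₁ p₂ L R` has the roots of `L` and `R` as its two children,
attached by edges carrying one-specific-change probabilities `p₁` and `p₂`. -/
inductive PhyloTree : Type
  | leaf : PhyloTree
  | node (p₁ p₂ : ℝ) (L R : PhyloTree) : PhyloTree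

namespace PhyloTree

/-- The number of leaves (taxa) of the tree. -/
def nLeaves : PhyloTree → ℕ
  | leaf => 1
  | node _ _ L R => nLeaves L + nLeaves R

/-- All edge substitution probabilities of the tree lie in `[0, 1/4]`. -/
def valid : PhyloTree → Prop
  | leaf => True
  | node p₁ p₂ L R => 0 ≤ p₁ ∧ p₁ ≤ 1/4 ∧ 0 ≤ p₂ ∧ p₂ ≤ 1/4 ∧ valid L ∧ valid R

end PhyloTree

/-- Transition probabilities of the symmetric 4-state model `N₄`: conditional
on the upper endpoint of an edge with substitution probability `q` being in
state `a`, the lower endpoint is in each specific state `b ≠ a` with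
probability `q`, and in state `a` with probability `1 - 3q`. -/
noncomputable def trans4 (q : ℝ) (a b : Fin 4) : ℝ := if a = b then 1 - 3*q else q

/-- `charProb4 t a f` is the probability, conditional on the root of `t`
being in state `a`, that the leaves of `t` (read from left to right) are in
the states recorded by the list `f`.  States evolve independently along the
edges according to `trans4`. -/
noncomputable def charProb4 : PhyloTree → Fin 4 → List (Fin 4) → ℝ
  | .leaf, a, f => if f = [a] then 1 else 0
  | .node p₁ p₂ L R, a, f =>
      ∑ b : Fin 4, ∑ c : Fin 4, trans4 p₁ a b * trans4 p₂ a c *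
        charProb4 L b (f.take L.nLeaves) * charProb4 R c (f.drop L.nLeaves)

/-- Fitch's parsimony operation: `A ∩ B` if it is nonempty, `A ∪ B` otherwise. -/
def fitchOp {k : ℕ} (A B : Finset (Fin k)) : Finset (Fin k) :=
  if (A ∩ B).Nonempty then A ∩ B else A ∪ B

/-- The set `MP(f,T)` assigned to the root of `t` by the Fitch algorithm when
the leaves carry the character (list of leaf states) `f`. -/
def fitchSet4 : PhyloTree → List (Fin 4) → Finset (Fin 4)
  | .leaf, [b] => {b}
  | .leaf, _ => ∅
  | .node _ _ L R, f =>
      fitchOp (fitchSet4 L (f.take L.nLeaves)) (fitchSet4 R (f.drop L.nLeaves))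

/-- `rootProb4 t a R = P(MP(f,T) = R ∣ root state = a)`. -/
noncomputable def rootProb4 (t : PhyloTree) (a : Fin 4) (R : Finset (Fin 4)) : ℝ :=
  ∑ f : Fin t.nLeaves → Fin 4,
    if fitchSet4 t (List.ofFn f) = R then charProb4 t a (List.ofFn f) else 0

/-- The reconstruction accuracy
`RA(X) = ∑_{R ⊆ A, α ∈ R} (1/|R|) · P(MP(f,T) = R ∣ ρ = α)`, with `α := 0`. -/
noncomputable def RA4 (t : PhyloTree) : ℝ :=
  ∑ R : Finset (Fin 4),
    if (0 : Fin 4) ∈ R then (R.card : ℝ)⁻¹ * rootProb4 t 0 R else 0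

/-- `ultra4 t p`: the tree `t` is ultrametric, and the probability of one
specific state change from the root to any leaf is `p` (under `N₄`, the
one-specific-change probabilities compose along a path as
`p₁ ∘ q₁ = p₁ + q₁ - 4·p₁·q₁`). -/
def ultra4 : PhyloTree → ℝ → Prop
  | .leaf, p => p = 0
  | .node p₁ p₂ L R, p => ∃ q₁ q₂, ultra4 L q₁ ∧ ultra4 R q₂ ∧
      p = p₁ + q₁ - 4*p₁*q₁ ∧ p = p₂ + q₂ - 4*p₂*q₂

section AuxProof

open Finset

lemma trans4_nonneg {q : ℝ} (h0 : 0 ≤ q) (h1 : q ≤ 1/4) (a b : Fin 4) :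
    0 ≤ trans4 q a b := by
  unfold trans4; split <;> nlinarith

lemma charProb4_nonneg :
    ∀ (t : PhyloTree), t.valid → ∀ (a : Fin 4) (f : List (Fin 4)),
      0 ≤ charProb4 t a f := by
  intro t
  induction t with
  | leaf =>
    intro _ a f
    rw [charProb4]; split <;> norm_num
  | node p q L R ihL ihR =>
    intro hv a f
    obtain ⟨hp0, hp1, hq0, hq1, hvL, hvR⟩ := hv
    rw [charProb4]
    refine Finset.sum_nonneg fun b _ => Finset.sum_nonneg fun c _ => ?_
    have h1 := trans4_nonneg hp0 hp1 a b
    have h2 := trans4_nonneg hq0 hq1 a c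
    have h3 := ihL hvL b (f.take L.nLeaves)
    have h4 := ihR hvR c (f.drop L.nLeaves)
    positivity

lemma rootProb4_nonneg {t : PhyloTree} (hv : t.valid) (a : Fin 4) (S : Finset (Fin 4)) :
    0 ≤ rootProb4 t a S := by
  rw [rootProb4]
  refine Finset.sum_nonneg fun f _ => ?_
  split
  · exact charProb4_nonneg t hv a _
  · exact le_refl 0

lemma trans4_perm (σ : Equiv.Perm (Fin 4)) (q : ℝ) (a b : Fin 4) :
    trans4 q (σ a) (σ b) = trans4 q a b := by
  unfold trans4
  simp [EmbeddingLike.apply_eq_iff_eq]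

lemma charProb4_perm (σ : Equiv.Perm (Fin 4)) :
    ∀ (t : PhyloTree) (a : Fin 4) (f : List (Fin 4)),
      charProb4 t (σ a) (f.map σ) = charProb4 t a f := by
  intro t
  induction t with
  | leaf =>
    intro a f
    rw [charProb4, charProb4]
    have hiff : f.map σ = [σ a] ↔ f = [a] := by
      constructor
      · intro h
        have h2 := congrArg (List.map σ.symm) h
        simpa using h2
      · intro h; simp [h]
    simp only [hiff]
  | node p q L R ihL ihR =>
    intro a f
    rw [charProb4, charProb4]
    symm
    refine Fintype.sum_equiv σ _ _ fun b => ?_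
    refine Fintype.sum_equiv σ _ _ fun c => ?_
    rw [trans4_perm, trans4_perm, ← List.map_take, ← List.map_drop, ihL, ihR]

lemma fitchOp_image {k : ℕ} (σ : Equiv.Perm (Fin k)) (A B : Finset (Fin k)) :
    fitchOp (A.image σ) (B.image σ) = (fitchOp A B).image σ := by
  unfold fitchOp
  rw [← Finset.image_inter A B σ.injective]
  by_cases h : (A ∩ B).Nonempty
  · simp [h, Finset.image_nonempty]
  · simp [h, Finset.image_nonempty, Finset.image_union]

lemma fitchSet4_perm (σ : Equiv.Perm (Fin 4)) :
    ∀ (t : PhyloTree) (f : List (Fin 4)),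
      fitchSet4 t (f.map σ) = (fitchSet4 t f).image σ := by
  intro t
  induction t with
  | leaf =>
    intro f
    match f with
    | [] => simp [fitchSet4]
    | [b] => simp [fitchSet4]
    | a :: b :: l => simp [fitchSet4]
  | node p q L R ihL ihR =>
    intro f
    rw [fitchSet4, fitchSet4, ← List.map_take, ← List.map_drop, ihL, ihR, fitchOp_image]

lemma rootProb4_perm (σ : Equiv.Perm (Fin 4)) (t : PhyloTree) (a : Fin 4)
    (S : Finset (Fin 4)) :
    rootProb4 t (σ a) (S.image σ) = rootProb4 t a S := by
  rw [rootProb4, rootProb4]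
  symm
  refine Fintype.sum_equiv (Equiv.arrowCongr (Equiv.refl (Fin t.nLeaves)) σ) _ _ fun g => ?_
  have h1 : List.ofFn ((Equiv.arrowCongr (Equiv.refl (Fin t.nLeaves)) σ) g)
      = (List.ofFn g).map σ := by
    rw [List.map_ofFn]; rfl
  rw [h1, fitchSet4_perm, charProb4_perm]
  have hiff : (fitchSet4 t (List.ofFn g)).image σ = S.image σ ↔
      fitchSet4 t (List.ofFn g) = S :=
    ⟨fun h => Finset.image_injective σ.injective h, fun h => by rw [h]⟩
  simp only [hiff]

lemma sum_char_one (G : List (Fin 4) → ℝ) :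
    ∑ f : Fin 1 → Fin 4, G (List.ofFn f) = ∑ b : Fin 4, G [b] := by
  rw [← Equiv.sum_comp (Equiv.funUnique (Fin 1) (Fin 4)).symm
    (fun f : Fin 1 → Fin 4 => G (List.ofFn f))]
  refine Finset.sum_congr rfl fun b _ => ?_
  congr 1

lemma rootProb4_leaf (a : Fin 4) (S : Finset (Fin 4)) :
    rootProb4 PhyloTree.leaf a S = if S = {a} then 1 else 0 := by
  rw [rootProb4]
  refine Eq.trans (sum_char_one (fun l =>
    if fitchSet4 PhyloTree.leaf l = S then charProb4 PhyloTree.leaf a l else 0)) ?_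
  have key : ∀ b : Fin 4,
      (if fitchSet4 PhyloTree.leaf [b] = S then charProb4 PhyloTree.leaf a [b] else 0)
        = if b = a then (if S = {a} then (1:ℝ) else 0) else 0 := by
    intro b
    have hfs : fitchSet4 PhyloTree.leaf [b] = {b} := rfl
    have hcp : charProb4 PhyloTree.leaf a [b] = if b = a then (1:ℝ) else 0 := by
      rw [charProb4]; simp
    rw [hfs, hcp]
    by_cases hb : b = a
    · subst hb
      by_cases hS : S = {b}
      · simp [hS]
      · have hS' : ({b} : Finset (Fin 4)) ≠ S := fun h => hS h.symm
        simp [hS, hS']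
    · by_cases h2 : ({b} : Finset (Fin 4)) = S
      · simp [hb, h2]
      · simp [hb, h2]
  rw [Finset.sum_congr rfl fun b _ => key b]
  rw [Finset.sum_ite_eq' Finset.univ a, if_pos (Finset.mem_univ a)]

lemma sum_split (m n : ℕ) (G : List (Fin 4) → ℝ) :
    ∑ f : Fin (m + n) → Fin 4, G (List.ofFn f)
      = ∑ fL : Fin m → Fin 4, ∑ fR : Fin n → Fin 4,
          G (List.ofFn fL ++ List.ofFn fR) := by
  rw [← Equiv.sum_comp (Fin.appendEquiv m n) (fun f => G (List.ofFn f)),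
    Fintype.sum_prod_type]
  refine Finset.sum_congr rfl fun fL _ => Finset.sum_congr rfl fun fR _ => ?_
  congr 1
  rw [show (Fin.appendEquiv m n) (fL, fR) = Fin.append fL fR from rfl]
  exact List.ofFn_fin_append fL fR

lemma sum4_swap {α β γ δ : Type*} [Fintype α] [Fintype β] [Fintype γ] [Fintype δ]
    (f : α → β → γ → δ → ℝ) :
    ∑ a : α, ∑ b : β, ∑ c : γ, ∑ d : δ, f a b c d
      = ∑ c : γ, ∑ d : δ, ∑ a : α, ∑ b : β, f a b c d := by
  calc ∑ a : α, ∑ b : β, ∑ c : γ, ∑ d : δ, f a b c d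
      = ∑ a : α, ∑ c : γ, ∑ b : β, ∑ d : δ, f a b c d :=
        Finset.sum_congr rfl fun a _ => Finset.sum_comm
    _ = ∑ c : γ, ∑ a : α, ∑ b : β, ∑ d : δ, f a b c d := Finset.sum_comm
    _ = ∑ c : γ, ∑ a : α, ∑ d : δ, ∑ b : β, f a b c d :=
        Finset.sum_congr rfl fun c _ => Finset.sum_congr rfl fun a _ => Finset.sum_comm
    _ = ∑ c : γ, ∑ d : δ, ∑ a : α, ∑ b : β, f a b c d :=
        Finset.sum_congr rfl fun c _ => Finset.sum_comm

lemma exchange (m n : ℕ) (GA : (Fin m → Fin 4) → Finset (Fin 4))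
    (GB : (Fin n → Fin 4) → Finset (Fin 4))
    (uL : Fin 4 → (Fin m → Fin 4) → ℝ) (uR : Fin 4 → (Fin n → Fin 4) → ℝ)
    (t1 t2 : Fin 4 → ℝ) (S : Finset (Fin 4)) :
    (∑ fL : Fin m → Fin 4, ∑ fR : Fin n → Fin 4,
      if fitchOp (GA fL) (GB fR) = S then
        (∑ b : Fin 4, ∑ c : Fin 4, t1 b * t2 c * uL b fL * uR c fR) else 0)
    = ∑ A : Finset (Fin 4), ∑ B : Finset (Fin 4),
        if fitchOp A B = S then
          (∑ b : Fin 4, t1 b * ∑ fL : Fin m → Fin 4, (if GA fL = A then uL b fL else 0)) *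
          (∑ c : Fin 4, t2 c * ∑ fR : Fin n → Fin 4, (if GB fR = B then uR c fR else 0))
        else 0 := by
  have key1 : ∀ (fL : Fin m → Fin 4) (fR : Fin n → Fin 4),
      (if fitchOp (GA fL) (GB fR) = S then
        (∑ b : Fin 4, ∑ c : Fin 4, t1 b * t2 c * uL b fL * uR c fR) else 0)
      = ∑ A : Finset (Fin 4), ∑ B : Finset (Fin 4),
          (if GA fL = A then (if GB fR = B then (if fitchOp A B = S then
            (∑ b : Fin 4, ∑ c : Fin 4, t1 b * t2 c * uL b fL * uR c fR) else 0) else 0)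
          else 0) := by
    intro fL fR
    symm
    have inner : ∀ A : Finset (Fin 4),
        (∑ B : Finset (Fin 4), (if GA fL = A then (if GB fR = B then (if fitchOp A B = S then
            (∑ b : Fin 4, ∑ c : Fin 4, t1 b * t2 c * uL b fL * uR c fR) else 0) else 0)
          else 0))
        = (if GA fL = A then (if fitchOp A (GB fR) = S then
            (∑ b : Fin 4, ∑ c : Fin 4, t1 b * t2 c * uL b fL * uR c fR) else 0) else 0) := by
      intro A
      by_cases h : GA fL = A
      · simp only [if_pos h]
        rw [Finset.sum_ite_eq Finset.univ (GB fR), if_pos (Finset.mem_univ _)]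
      · simp [h]
    rw [Finset.sum_congr rfl fun A _ => inner A]
    rw [Finset.sum_ite_eq Finset.univ (GA fL), if_pos (Finset.mem_univ _)]
  calc (∑ fL : Fin m → Fin 4, ∑ fR : Fin n → Fin 4,
      if fitchOp (GA fL) (GB fR) = S then
        (∑ b : Fin 4, ∑ c : Fin 4, t1 b * t2 c * uL b fL * uR c fR) else 0)
      = ∑ fL : Fin m → Fin 4, ∑ fR : Fin n → Fin 4, ∑ A : Finset (Fin 4),
          ∑ B : Finset (Fin 4),
          (if GA fL = A then (if GB fR = B then (if fitchOp A B = S then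
            (∑ b : Fin 4, ∑ c : Fin 4, t1 b * t2 c * uL b fL * uR c fR) else 0) else 0)
          else 0) :=
        Finset.sum_congr rfl fun fL _ => Finset.sum_congr rfl fun fR _ => key1 fL fR
    _ = ∑ A : Finset (Fin 4), ∑ B : Finset (Fin 4), ∑ fL : Fin m → Fin 4,
          ∑ fR : Fin n → Fin 4,
          (if GA fL = A then (if GB fR = B then (if fitchOp A B = S then
            (∑ b : Fin 4, ∑ c : Fin 4, t1 b * t2 c * uL b fL * uR c fR) else 0) else 0)
          else 0) :=
        sum4_swap _
    _ = ∑ A : Finset (Fin 4), ∑ B : Finset (Fin 4),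
        if fitchOp A B = S then
          (∑ b : Fin 4, t1 b * ∑ fL : Fin m → Fin 4, (if GA fL = A then uL b fL else 0)) *
          (∑ c : Fin 4, t2 c * ∑ fR : Fin n → Fin 4, (if GB fR = B then uR c fR else 0))
        else 0 := by
        refine Finset.sum_congr rfl fun A _ => Finset.sum_congr rfl fun B _ => ?_
        by_cases hS : fitchOp A B = S
        · simp only [if_pos hS]
          have hfact : ∀ (fL : Fin m → Fin 4) (fR : Fin n → Fin 4),
              (if GA fL = A then (if GB fR = B then
                (∑ b : Fin 4, ∑ c : Fin 4, t1 b * t2 c * uL b fL * uR c fR) else 0) else 0)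
              = (if GA fL = A then ∑ b : Fin 4, t1 b * uL b fL else 0) *
                (if GB fR = B then ∑ c : Fin 4, t2 c * uR c fR else 0) := by
            intro fL fR
            by_cases h1 : GA fL = A
            · by_cases h2 : GB fR = B
              · simp only [if_pos h1, if_pos h2]
                rw [Finset.sum_mul_sum]
                refine Finset.sum_congr rfl fun b _ => Finset.sum_congr rfl fun c _ => ?_
                ring
              · simp [h1, h2]
            · simp [h1]
          rw [Finset.sum_congr rfl fun fL _ => Finset.sum_congr rfl fun fR _ => hfact fL fR]
          rw [← Finset.sum_mul_sum]
          congr 1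
          · have h1 : ∀ fL : Fin m → Fin 4,
                (if GA fL = A then ∑ b : Fin 4, t1 b * uL b fL else 0)
                  = ∑ b : Fin 4, t1 b * (if GA fL = A then uL b fL else 0) := by
              intro fL; by_cases h : GA fL = A <;> simp [h]
            rw [Finset.sum_congr rfl fun fL _ => h1 fL, Finset.sum_comm]
            exact Finset.sum_congr rfl fun b _ => (Finset.mul_sum _ _ _).symm
          · have h1 : ∀ fR : Fin n → Fin 4,
                (if GB fR = B then ∑ c : Fin 4, t2 c * uR c fR else 0)
                  = ∑ c : Fin 4, t2 c * (if GB fR = B then uR c fR else 0) := by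
              intro fR; by_cases h : GB fR = B <;> simp [h]
            rw [Finset.sum_congr rfl fun fR _ => h1 fR, Finset.sum_comm]
            exact Finset.sum_congr rfl fun c _ => (Finset.mul_sum _ _ _).symm
        · simp [hS]

lemma rootProb4_node (p q : ℝ) (L R : PhyloTree) (a : Fin 4) (S : Finset (Fin 4)) :
    rootProb4 (PhyloTree.node p q L R) a S
      = ∑ A : Finset (Fin 4), ∑ B : Finset (Fin 4),
          if fitchOp A B = S then
            (∑ b : Fin 4, trans4 p a b * rootProb4 L b A) *
            (∑ c : Fin 4, trans4 q a c * rootProb4 R c B)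
          else 0 := by
  have step1 : rootProb4 (PhyloTree.node p q L R) a S
      = ∑ fL : Fin L.nLeaves → Fin 4, ∑ fR : Fin R.nLeaves → Fin 4,
          (if fitchSet4 (PhyloTree.node p q L R) (List.ofFn fL ++ List.ofFn fR) = S then
            charProb4 (PhyloTree.node p q L R) a (List.ofFn fL ++ List.ofFn fR) else 0) := by
    rw [rootProb4]
    exact sum_split L.nLeaves R.nLeaves
      (fun l => if fitchSet4 (PhyloTree.node p q L R) l = S then
        charProb4 (PhyloTree.node p q L R) a l else 0)
  rw [step1]
  have step2 : ∀ (fL : Fin L.nLeaves → Fin 4) (fR : Fin R.nLeaves → Fin 4),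
      (if fitchSet4 (PhyloTree.node p q L R) (List.ofFn fL ++ List.ofFn fR) = S then
        charProb4 (PhyloTree.node p q L R) a (List.ofFn fL ++ List.ofFn fR) else 0)
      = if fitchOp (fitchSet4 L (List.ofFn fL)) (fitchSet4 R (List.ofFn fR)) = S then
          (∑ b : Fin 4, ∑ c : Fin 4, trans4 p a b * trans4 q a c *
            charProb4 L b (List.ofFn fL) * charProb4 R c (List.ofFn fR)) else 0 := by
    intro fL fR
    have htake : (List.ofFn fL ++ List.ofFn fR).take L.nLeaves = List.ofFn fL :=
      List.take_left' (by simp)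
    have hdrop : (List.ofFn fL ++ List.ofFn fR).drop L.nLeaves = List.ofFn fR :=
      List.drop_left' (by simp)
    rw [fitchSet4, charProb4, htake, hdrop]
  rw [Finset.sum_congr rfl fun fL _ => Finset.sum_congr rfl fun fR _ => step2 fL fR]
  refine Eq.trans (exchange L.nLeaves R.nLeaves (fun fL => fitchSet4 L (List.ofFn fL))
    (fun fR => fitchSet4 R (List.ofFn fR))
    (fun b fL => charProb4 L b (List.ofFn fL)) (fun c fR => charProb4 R c (List.ofFn fR))
    (fun b => trans4 p a b) (fun c => trans4 q a c) S) ?_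
  refine Finset.sum_congr rfl fun A _ => Finset.sum_congr rfl fun B _ => ?_
  rfl

lemma swap_image_eq {i j : Fin 4} {A : Finset (Fin 4)} (h : i ∈ A ↔ j ∈ A) :
    A.image (Equiv.swap i j) = A := by
  ext x
  simp only [Finset.mem_image]
  constructor
  · rintro ⟨y, hy, rfl⟩
    by_cases hyi : y = i
    · subst hyi; rw [Equiv.swap_apply_left]; exact h.mp hy
    · by_cases hyj : y = j
      · subst hyj; rw [Equiv.swap_apply_right]; exact h.mpr hy
      · rwa [Equiv.swap_apply_of_ne_of_ne hyi hyj]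
  · intro hx
    refine ⟨Equiv.swap i j x, ?_, Equiv.swap_apply_self i j x⟩
    by_cases hxi : x = i
    · subst hxi; rw [Equiv.swap_apply_left]; exact h.mp hx
    · by_cases hxj : x = j
      · subst hxj; rw [Equiv.swap_apply_right]; exact h.mpr hx
      · rwa [Equiv.swap_apply_of_ne_of_ne hxi hxj]

lemma fitchOp_comm {k : ℕ} (A B : Finset (Fin k)) : fitchOp B A = fitchOp A B := by
  unfold fitchOp
  rw [Finset.inter_comm, Finset.union_comm]

lemma fitch_case {A B S : Finset (Fin 4)} (hf : fitchOp A B = S)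
    (h0S : (0 : Fin 4) ∈ S) (h2S : (2 : Fin 4) ∉ S) :
    ((0 : Fin 4) ∈ A ∧ (2 : Fin 4) ∉ A) ∨ A.image (Equiv.swap 0 2) = A := by
  by_cases h2 : (2 : Fin 4) ∈ A
  · by_cases h0 : (0 : Fin 4) ∈ A
    · exact Or.inr (swap_image_eq (iff_of_true h0 h2))
    · exfalso
      unfold fitchOp at hf
      split at hf
      · subst hf
        exact h0 (Finset.mem_of_mem_inter_left h0S)
      · subst hf
        exact h2S (Finset.mem_union_left _ h2)
  · by_cases h0 : (0 : Fin 4) ∈ A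
    · exact Or.inl ⟨h0, h2⟩
    · exact Or.inr (swap_image_eq (iff_of_false h0 h2))

lemma rootProb4_swap_state (L : PhyloTree) (b : Fin 4) (A : Finset (Fin 4)) :
    rootProb4 L b (A.image (Equiv.swap (0 : Fin 4) 2))
      = rootProb4 L (Equiv.swap (0 : Fin 4) 2 b) A := by
  calc rootProb4 L b (A.image (Equiv.swap (0 : Fin 4) 2))
      = rootProb4 L (Equiv.swap (0 : Fin 4) 2 (Equiv.swap (0 : Fin 4) 2 b))
          (A.image (Equiv.swap (0 : Fin 4) 2)) := by
        rw [Equiv.swap_apply_self]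
    _ = rootProb4 L (Equiv.swap (0 : Fin 4) 2 b) A :=
        rootProb4_perm (Equiv.swap (0 : Fin 4) 2) L (Equiv.swap (0 : Fin 4) 2 b) A

lemma Qmono (L : PhyloTree) (hvL : L.valid) (p : ℝ) (hp0 : 0 ≤ p) (hp1 : p ≤ 1/4)
    (ih : ∀ S : Finset (Fin 4), (0 : Fin 4) ∈ S → (2 : Fin 4) ∉ S →
      rootProb4 L 0 (S.image (Equiv.swap 0 2)) ≤ rootProb4 L 0 S)
    (A : Finset (Fin 4))
    (hA : ((0 : Fin 4) ∈ A ∧ (2 : Fin 4) ∉ A) ∨ A.image (Equiv.swap 0 2) = A) :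
    (∑ b : Fin 4, trans4 p 0 b * rootProb4 L b (A.image (Equiv.swap 0 2)))
      ≤ ∑ b : Fin 4, trans4 p 0 b * rootProb4 L b A := by
  rcases hA with ⟨h0, h2⟩ | hinv
  · have s0 : Equiv.swap (0 : Fin 4) 2 0 = 2 := Equiv.swap_apply_left 0 2
    have s2 : Equiv.swap (0 : Fin 4) 2 2 = 0 := Equiv.swap_apply_right 0 2
    have s1 : Equiv.swap (0 : Fin 4) 2 1 = 1 :=
      Equiv.swap_apply_of_ne_of_ne (by decide) (by decide)
    have s3 : Equiv.swap (0 : Fin 4) 2 3 = 3 :=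
      Equiv.swap_apply_of_ne_of_ne (by decide) (by decide)
    have ihA : rootProb4 L 2 A ≤ rootProb4 L 0 A := by
      have h := ih A h0 h2
      rwa [rootProb4_swap_state, s0] at h
    have t0 : trans4 p 0 0 = 1 - 3*p := by rw [trans4]; exact if_pos rfl
    have t1 : trans4 p 0 1 = p := by rw [trans4]; exact if_neg (by decide)
    have t2 : trans4 p 0 2 = p := by rw [trans4]; exact if_neg (by decide)
    have t3 : trans4 p 0 3 = p := by rw [trans4]; exact if_neg (by decide)
    rw [Fin.sum_univ_four, Fin.sum_univ_four]
    rw [rootProb4_swap_state L 0 A, rootProb4_swap_state L 1 A,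
      rootProb4_swap_state L 2 A, rootProb4_swap_state L 3 A, s0, s1, s2, s3]
    rw [t0, t1, t2, t3]
    nlinarith [ihA, hp1]
  · rw [hinv]

lemma image_swap_inj_iff (X Y : Finset (Fin 4)) :
    X.image (Equiv.swap (0 : Fin 4) 2) = Y.image (Equiv.swap (0 : Fin 4) 2) ↔ X = Y :=
  ⟨fun h => Finset.image_injective (Equiv.swap (0 : Fin 4) 2).injective h,
   fun h => by rw [h]⟩

lemma mono : ∀ (t : PhyloTree), t.valid → ∀ S : Finset (Fin 4),
    (0 : Fin 4) ∈ S → (2 : Fin 4) ∉ S →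
    rootProb4 t 0 (S.image (Equiv.swap 0 2)) ≤ rootProb4 t 0 S := by
  intro t
  induction t with
  | leaf =>
    intro _ S h0S h2S
    rw [rootProb4_leaf, rootProb4_leaf]
    have hne : S.image (Equiv.swap 0 2) ≠ {(0 : Fin 4)} := by
      intro h
      have h2 := congrArg (Finset.image (⇑(Equiv.swap (0 : Fin 4) 2))) h
      rw [Finset.image_image] at h2
      have hid : (⇑(Equiv.swap (0 : Fin 4) 2) ∘ ⇑(Equiv.swap (0 : Fin 4) 2)) = id :=
        funext fun x => Equiv.swap_apply_self _ _ x
      rw [hid, Finset.image_id, Finset.image_singleton, Equiv.swap_apply_left] at h2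
      rw [h2] at h0S
      simp at h0S
    rw [if_neg hne]
    split <;> norm_num
  | node p q L R ihL ihR =>
    intro hv S h0S h2S
    obtain ⟨hp0, hp1, hq0, hq1, hvL, hvR⟩ := hv
    rw [rootProb4_node, rootProb4_node]
    calc (∑ A : Finset (Fin 4), ∑ B : Finset (Fin 4),
        if fitchOp A B = S.image (Equiv.swap 0 2) then
          (∑ b : Fin 4, trans4 p 0 b * rootProb4 L b A) *
          (∑ c : Fin 4, trans4 q 0 c * rootProb4 R c B) else 0)
        = ∑ A : Finset (Fin 4), ∑ B : Finset (Fin 4),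
            if fitchOp A B = S then
              (∑ b : Fin 4, trans4 p 0 b * rootProb4 L b (A.image (Equiv.swap 0 2))) *
              (∑ c : Fin 4, trans4 q 0 c * rootProb4 R c (B.image (Equiv.swap 0 2)))
            else 0 := by
          symm
          refine Fintype.sum_equiv (Equiv.finsetCongr (Equiv.swap (0 : Fin 4) 2)) _ _
            fun A => ?_
          refine Fintype.sum_equiv (Equiv.finsetCongr (Equiv.swap (0 : Fin 4) 2)) _ _
            fun B => ?_
          simp only [Equiv.finsetCongr_apply, Finset.map_eq_image, Equiv.coe_toEmbedding]
          rw [fitchOp_image]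
          simp only [image_swap_inj_iff]
      _ ≤ ∑ A : Finset (Fin 4), ∑ B : Finset (Fin 4),
            if fitchOp A B = S then
              (∑ b : Fin 4, trans4 p 0 b * rootProb4 L b A) *
              (∑ c : Fin 4, trans4 q 0 c * rootProb4 R c B) else 0 := by
          refine Finset.sum_le_sum fun A _ => Finset.sum_le_sum fun B _ => ?_
          by_cases hf : fitchOp A B = S
          · rw [if_pos hf, if_pos hf]
            have hA := fitch_case hf h0S h2S
            have hB := fitch_case (fitchOp_comm A B ▸ hf) h0S h2S
            refine mul_le_mul (Qmono L hvL p hp0 hp1 (ihL hvL) A hA)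
              (Qmono R hvR q hq0 hq1 (ihR hvR) B hB)
              (Finset.sum_nonneg fun c _ => mul_nonneg (trans4_nonneg hq0 hq1 0 c)
                (rootProb4_nonneg hvR c _))
              (Finset.sum_nonneg fun b _ => mul_nonneg (trans4_nonneg hp0 hp1 0 b)
                (rootProb4_nonneg hvL b _))
          · rw [if_neg hf, if_neg hf]

end AuxProof

/-- For any rooted binary phylogenetic tree under `N₄` (not
necessarily ultrametric), `P_{αβ}(X) ≥ P_{βγ}(X)`. -/
theorem rootProb4_alphabeta_ge_betagamma (t : PhyloTree) (hn : 2 ≤ t.nLeaves)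
    (hv : t.valid) :
    rootProb4 t 0 {0, 1} ≥ rootProb4 t 0 {1, 2} := by
  have h := mono t hv {0, 1} (by decide) (by decide)
  have himg : ({0, 1} : Finset (Fin 4)).image (Equiv.swap 0 2) = {1, 2} := by decide
  rw [himg] at h
  exact h
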